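/- Let 𝐒 = (S_L, S_R) be a pair of binary supports of sizes m×r and n×r such that the r rank-one supports of φ(𝐒) are pairwise disjoint. Then uniquescaling(Σ_𝐒) = IC(𝐒) ∩ MC(𝐒): a pair (X, Y) ∈ Σ_𝐒 has the property that every (X', Y') ∈ Σ_𝐒 with X'Y'ᵀ = XYᵀ is scaling-equivalent to (X, Y) if and only if colsupp(X) = colsupp(Y), colsupp(X) = colsupp(S_L) and colsupp(Y) = colsupp(S_R). -/
import Mathlib


open Matrix

/-- The support of a matrix: the set of index pairs of its nonzero entries. -/
def msupp {m r : ℕ} (M : Matrix (Fin m) (Fin r) ℂ) : Set (Fin m × Fin r) :=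
  {p | M p.1 p.2 ≠ 0}

/-- The column support of a matrix: the set of indices of nonzero columns. -/
def colsupp {m r : ℕ} (M : Matrix (Fin m) (Fin r) ℂ) : Set (Fin r) :=
  {i | ∃ k, M k i ≠ 0}

/-- The column support of a binary support (viewed as a set of index pairs). -/
def colsuppS {m r : ℕ} (S : Set (Fin m × Fin r)) : Set (Fin r) :=
  {i | ∃ k, (k, i) ∈ S}

/-- Under disjoint rank-one supports, the `(k,l)` entry of `A * Bᵀ` collapses to the
single term at index `i` whenever `(k,i) ∈ SL` and `(l,i) ∈ SR`. -/
lemma prod_entry_single {m n r : ℕ}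
    (SL : Set (Fin m × Fin r)) (SR : Set (Fin n × Fin r))
    (hdisj : ∀ i j : Fin r, i ≠ j →
      Disjoint (({k | (k, i) ∈ SL} : Set (Fin m)) ×ˢ ({l | (l, i) ∈ SR} : Set (Fin n)))
               (({k | (k, j) ∈ SL} : Set (Fin m)) ×ˢ ({l | (l, j) ∈ SR} : Set (Fin n))))
    (A : Matrix (Fin m) (Fin r) ℂ) (B : Matrix (Fin n) (Fin r) ℂ)
    (hA : msupp A ⊆ SL) (hB : msupp B ⊆ SR) (k : Fin m) (l : Fin n) (i : Fin r)
    (hk : (k, i) ∈ SL) (hl : (l, i) ∈ SR) :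
    (A * Bᵀ) k l = A k i * B l i := by
  rw [Matrix.mul_apply]
  rw [Finset.sum_eq_single i]
  · rfl
  · intro j _ hji
    by_cases hAj : A k j = 0
    · simp [hAj]
    by_cases hBj : B l j = 0
    · simp [Matrix.transpose_apply, hBj]
    exfalso
    have hkj : (k, j) ∈ SL := hA hAj
    have hlj : (l, j) ∈ SR := hB hBj
    exact Set.disjoint_left.mp (hdisj i j (fun h => hji h.symm))
      (Set.mk_mem_prod hk hl) (Set.mk_mem_prod hkj hlj)
  · intro h; exact absurd (Finset.mem_univ i) h

/-- Let `𝐒 = (S_L, S_R)` be a pair of binary supports (of sizes `m × r`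
and `n × r`, viewed as sets of index pairs) such that the `r` rank-one supports of
`φ(𝐒)`, namely `{k | (k,i) ∈ S_L} × {l | (l,i) ∈ S_R}`, are pairwise disjoint.  Then
`uniquescaling(Σ_𝐒) = IC(𝐒) ∩ MC(𝐒)`: a pair `(X, Y) ∈ Σ_𝐒` satisfies that every
`(X', Y') ∈ Σ_𝐒` with `X'Y'ᵀ = XYᵀ` is scaling-equivalent to `(X, Y)` if and only if
`colsupp X = colsupp Y`, `colsupp X = colsupp S_L` and `colsupp Y = colsupp S_R`. -/
theorem uniquescaling_eq_IC_inter_MC {m n r : ℕ}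
    (SL : Set (Fin m × Fin r)) (SR : Set (Fin n × Fin r))
    (hdisj : ∀ i j : Fin r, i ≠ j →
      Disjoint (({k | (k, i) ∈ SL} : Set (Fin m)) ×ˢ ({l | (l, i) ∈ SR} : Set (Fin n)))
               (({k | (k, j) ∈ SL} : Set (Fin m)) ×ˢ ({l | (l, j) ∈ SR} : Set (Fin n))))
    (X : Matrix (Fin m) (Fin r) ℂ) (Y : Matrix (Fin n) (Fin r) ℂ)
    (hX : msupp X ⊆ SL) (hY : msupp Y ⊆ SR) :
    (∀ (X' : Matrix (Fin m) (Fin r) ℂ) (Y' : Matrix (Fin n) (Fin r) ℂ),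
        msupp X' ⊆ SL → msupp Y' ⊆ SR → X' * Y'ᵀ = X * Yᵀ →
        ∃ d : Fin r → ℂ, (∀ i, d i ≠ 0) ∧
          X' = X * Matrix.diagonal d ∧ Y' = Y * Matrix.diagonal fun i => (d i)⁻¹) ↔
      (colsupp X = colsupp Y ∧ colsupp X = colsuppS SL ∧ colsupp Y = colsuppS SR) := by
  constructor
  · intro H
    -- first: colsupp X = colsupp Y
    have h1 : colsupp X = colsupp Y := by
      ext i
      constructor
      · rintro ⟨k, hk⟩
        by_contra hi
        have hYi : ∀ l, Y l i = 0 := by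
          intro l; by_contra h; exact hi ⟨l, h⟩
        set X' : Matrix (Fin m) (Fin r) ℂ :=
          Matrix.of fun k' j => if j = i then 0 else X k' j with hX'def
        have hX' : msupp X' ⊆ SL := by
          intro p hp
          simp only [msupp, hX'def, Matrix.of_apply, Set.mem_setOf_eq] at hp
          split at hp
          · exact absurd rfl hp
          · exact hX hp
        have hprod : X' * Yᵀ = X * Yᵀ := by
          ext k' l
          rw [Matrix.mul_apply, Matrix.mul_apply]
          refine Finset.sum_congr rfl fun j _ => ?_
          by_cases hj : j = i
          · subst hj
            simp [hX'def, Matrix.transpose_apply, hYi l]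
          · simp [hX'def, hj]
        obtain ⟨d, hd, hXd, -⟩ := H X' Y hX' hY hprod
        have := congrFun (congrFun hXd k) i
        simp only [hX'def, Matrix.of_apply, if_pos rfl, Matrix.mul_diagonal] at this
        exact hk (by
          rcases mul_eq_zero.mp this.symm with h | h
          · exact h
          · exact absurd h (hd i))
      · rintro ⟨l, hl⟩
        by_contra hi
        have hXi : ∀ k, X k i = 0 := by
          intro k; by_contra h; exact hi ⟨k, h⟩
        set Y' : Matrix (Fin n) (Fin r) ℂ :=
          Matrix.of fun l' j => if j = i then 0 else Y l' j with hY'def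
        have hY' : msupp Y' ⊆ SR := by
          intro p hp
          simp only [msupp, hY'def, Matrix.of_apply, Set.mem_setOf_eq] at hp
          split at hp
          · exact absurd rfl hp
          · exact hY hp
        have hprod : X * Y'ᵀ = X * Yᵀ := by
          ext k l'
          rw [Matrix.mul_apply, Matrix.mul_apply]
          refine Finset.sum_congr rfl fun j _ => ?_
          by_cases hj : j = i
          · subst hj
            simp [hY'def, Matrix.transpose_apply, hXi k]
          · simp [hY'def, hj]
        obtain ⟨d, hd, -, hYd⟩ := H X Y' hX hY' hprod
        have := congrFun (congrFun hYd l) i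
        simp only [hY'def, Matrix.of_apply, if_pos rfl, Matrix.mul_diagonal] at this
        exact hl (by
          rcases mul_eq_zero.mp this.symm with h | h
          · exact h
          · exact absurd h (inv_ne_zero (hd i)))
    refine ⟨h1, ?_, ?_⟩
    -- colsupp X = colsuppS SL
    · ext i
      constructor
      · rintro ⟨k, hk⟩; exact ⟨k, hX hk⟩
      · rintro ⟨k, hki⟩
        by_contra hi
        have hXi : ∀ k', X k' i = 0 := by
          intro k'; by_contra h; exact hi ⟨k', h⟩
        have hYi : ∀ l, Y l i = 0 := by
          have hiY : i ∉ colsupp Y := by rw [← h1]; exact hi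
          intro l; by_contra h; exact hiY ⟨l, h⟩
        set X' : Matrix (Fin m) (Fin r) ℂ :=
          Matrix.of fun k' j => if k' = k ∧ j = i then 1 else X k' j with hX'def
        have hX' : msupp X' ⊆ SL := by
          intro p hp
          simp only [msupp, hX'def, Matrix.of_apply, Set.mem_setOf_eq] at hp
          split at hp
          · rename_i hcond
            have : p = (k, i) := Prod.ext hcond.1 hcond.2
            rw [this]; exact hki
          · exact hX hp
        have hprod : X' * Yᵀ = X * Yᵀ := by
          ext k' l
          rw [Matrix.mul_apply, Matrix.mul_apply]
          refine Finset.sum_congr rfl fun j _ => ?_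
          by_cases hj : j = i
          · subst hj
            simp [hX'def, Matrix.transpose_apply, hYi l]
          · simp [hX'def, hj]
        obtain ⟨d, hd, hXd, -⟩ := H X' Y hX' hY hprod
        have := congrFun (congrFun hXd k) i
        simp [hX'def, Matrix.mul_diagonal, hXi k] at this
    -- colsupp Y = colsuppS SR
    · ext i
      constructor
      · rintro ⟨l, hl⟩; exact ⟨l, hY hl⟩
      · rintro ⟨l, hli⟩
        by_contra hi
        have hYi : ∀ l', Y l' i = 0 := by
          intro l'; by_contra h; exact hi ⟨l', h⟩
        have hXi : ∀ k, X k i = 0 := by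
          have hiX : i ∉ colsupp X := by rw [h1]; exact hi
          intro k; by_contra h; exact hiX ⟨k, h⟩
        set Y' : Matrix (Fin n) (Fin r) ℂ :=
          Matrix.of fun l' j => if l' = l ∧ j = i then 1 else Y l' j with hY'def
        have hY' : msupp Y' ⊆ SR := by
          intro p hp
          simp only [msupp, hY'def, Matrix.of_apply, Set.mem_setOf_eq] at hp
          split at hp
          · rename_i hcond
            have : p = (l, i) := Prod.ext hcond.1 hcond.2
            rw [this]; exact hli
          · exact hY hp
        have hprod : X * Y'ᵀ = X * Yᵀ := by
          ext k l'
          rw [Matrix.mul_apply, Matrix.mul_apply]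
          refine Finset.sum_congr rfl fun j _ => ?_
          by_cases hj : j = i
          · subst hj
            simp [hY'def, Matrix.transpose_apply, hXi k]
          · simp [hY'def, hj]
        obtain ⟨d, hd, -, hYd⟩ := H X Y' hX hY' hprod
        have := congrFun (congrFun hYd l) i
        simp [hY'def, Matrix.mul_diagonal, hYi l] at this
  · rintro ⟨h1, h2, h3⟩ X' Y' hX' hY' hprod
    classical
    set d : Fin r → ℂ := fun i =>
      if h : ∃ k, X k i ≠ 0 then X' h.choose i / X h.choose i else 1 with hddef
    have key : ∀ i, d i ≠ 0 ∧ (∀ k, X' k i = X k i * d i) ∧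
        (∀ l, Y' l i = Y l i * (d i)⁻¹) := by
      intro i
      by_cases hi : ∃ k, X k i ≠ 0
      · have hdi : d i = X' hi.choose i / X hi.choose i := by
          simp only [hddef, dif_pos hi]
        set k₀ := hi.choose with hk₀def
        have hk₀ : X k₀ i ≠ 0 := hi.choose_spec
        have hiY : i ∈ colsupp Y := h1 ▸ (⟨k₀, hk₀⟩ : i ∈ colsupp X)
        obtain ⟨l₀, hl₀⟩ := hiY
        have hkSL : (k₀, i) ∈ SL := hX hk₀
        have hlSR : (l₀, i) ∈ SR := hY hl₀
        have e₀ : X' k₀ i * Y' l₀ i = X k₀ i * Y l₀ i := by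
          rw [← prod_entry_single SL SR hdisj X' Y' hX' hY' k₀ l₀ i hkSL hlSR, hprod,
            prod_entry_single SL SR hdisj X Y hX hY k₀ l₀ i hkSL hlSR]
        have hne : X k₀ i * Y l₀ i ≠ 0 := mul_ne_zero hk₀ hl₀
        have hX'k₀ : X' k₀ i ≠ 0 := by
          intro h; rw [h, zero_mul] at e₀; exact hne e₀.symm
        have hY'l₀ : Y' l₀ i ≠ 0 := by
          intro h; rw [h, mul_zero] at e₀; exact hne e₀.symm
        have hdne : d i ≠ 0 := by
          rw [hdi]; exact div_ne_zero hX'k₀ hk₀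
        refine ⟨hdne, ?_, ?_⟩
        · intro k
          by_cases hkS : (k, i) ∈ SL
          · have e : X' k i * Y' l₀ i = X k i * Y l₀ i := by
              rw [← prod_entry_single SL SR hdisj X' Y' hX' hY' k l₀ i hkS hlSR, hprod,
                prod_entry_single SL SR hdisj X Y hX hY k l₀ i hkS hlSR]
            rw [hdi]
            have goal2 : X' k i * X k₀ i = X k i * X' k₀ i := by
              apply mul_right_cancel₀ hY'l₀
              linear_combination X k₀ i * e - X k i * e₀
            field_simp
            linear_combination goal2
          · have hXk : X k i = 0 := by
              by_contra h; exact hkS (hX h)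
            have hX'k : X' k i = 0 := by
              by_contra h; exact hkS (hX' h)
            rw [hXk, hX'k, zero_mul]
        · intro l
          by_cases hlS : (l, i) ∈ SR
          · have e : X' k₀ i * Y' l i = X k₀ i * Y l i := by
              rw [← prod_entry_single SL SR hdisj X' Y' hX' hY' k₀ l i hkSL hlS, hprod,
                prod_entry_single SL SR hdisj X Y hX hY k₀ l i hkSL hlS]
            rw [hdi]
            field_simp
            linear_combination e
          · have hYl : Y l i = 0 := by
              by_contra h; exact hlS (hY h)
            have hY'l : Y' l i = 0 := by
              by_contra h; exact hlS (hY' h)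
            rw [hYl, hY'l, zero_mul]
      · have hdi : d i = 1 := by simp only [hddef, dif_neg hi]
        have hXi : ∀ k, X k i = 0 := by
          intro k; by_contra h; exact hi ⟨k, h⟩
        have hiSL : i ∉ colsuppS SL := h2 ▸ hi
        have hiY : i ∉ colsupp Y := h1 ▸ hi
        have hiSR : i ∉ colsuppS SR := h3 ▸ hiY
        have hX'i : ∀ k, X' k i = 0 := by
          intro k; by_contra h; exact hiSL ⟨k, hX' h⟩
        have hYi : ∀ l, Y l i = 0 := by
          intro l; by_contra h; exact hiY ⟨l, h⟩
        have hY'i : ∀ l, Y' l i = 0 := by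
          intro l; by_contra h; exact hiSR ⟨l, hY' h⟩
        refine ⟨by rw [hdi]; exact one_ne_zero, ?_, ?_⟩
        · intro k; rw [hX'i k, hXi k, zero_mul]
        · intro l; rw [hY'i l, hYi l, zero_mul]
    refine ⟨d, fun i => (key i).1, ?_, ?_⟩
    · ext k i
      rw [Matrix.mul_diagonal]
      exact (key i).2.1 k
    · ext l i
      rw [Matrix.mul_diagonal]
      exact (key i).2.2 l
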